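/- The function (φ,ψ) : [0,∞] × D → D², defined for finite κ by ψ_κ(x)(t) = sup_{0≤s≤t}(x(s) − κ)⁺ and φ_κ(x)(t) = x(t) − ψ_κ(x)(t), and for κ = ∞ by (φ_∞, ψ_∞) = (identity, 0), is continuous with respect to the product topology when [0,∞] is equipped with the order topology and D is equipped with the topology of uniform convergence over bounded intervals. -/

import Mathlib

open MeasureTheory Filter Set
open scoped ENNReal

noncomputable section

/-- `f` is càdlàg on `[0,∞)`: right-continuous at every `t ≥ 0` and possessing
finite left limits at every `t > 0`.  (Values on `(-∞,0)` are irrelevant.) -/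
def Cadlag (f : ℝ → ℝ) : Prop :=
  (∀ t : ℝ, 0 ≤ t → ContinuousWithinAt f (Set.Ici t) t) ∧
    (∀ t : ℝ, 0 < t → ∃ L : ℝ, Filter.Tendsto f (nhdsWithin t (Set.Iio t)) (nhds L))

/-- Uniform norm of `x` on `[0,t]`: `‖x‖_t = sup_{0 ≤ s ≤ t} |x(s)|`. -/
def unif (x : ℝ → ℝ) (t : ℝ) : ℝ := ⨆ s : Set.Icc (0:ℝ) t, |x s.1|

/-- Regulator of the one-sided reflection map with upper barrier `κ ∈ ℝ`:
`ψ_κ(x)(t) = sup_{0 ≤ s ≤ t} (x(s) - κ)⁺`. -/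
def psiR (κ : ℝ) (x : ℝ → ℝ) (t : ℝ) : ℝ := ⨆ s : Set.Icc (0:ℝ) t, max (x s.1 - κ) 0

/-- One-sided reflection map with upper barrier `κ ∈ ℝ`: `φ_κ(x) = x - ψ_κ(x)`. -/
def phiR (κ : ℝ) (x : ℝ → ℝ) (t : ℝ) : ℝ := x t - psiR κ x t

/-- Regulator for a barrier `κ ∈ [0,∞]`; for `κ = ∞` it is identically `0`. -/
def psiE (κ : ℝ≥0∞) (x : ℝ → ℝ) : ℝ → ℝ := if κ = ⊤ then 0 else psiR κ.toReal x

/-- Reflection map for a barrier `κ ∈ [0,∞]`; for `κ = ∞` it is the identity. -/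
def phiE (κ : ℝ≥0∞) (x : ℝ → ℝ) : ℝ → ℝ := if κ = ⊤ then x else phiR κ.toReal x

/-- "`∫ 𝟙_S du = 0`": every Stieltjes function agreeing with the
(constant-below-zero extension of) `u` assigns measure zero to `S`. -/
def ZeroStieltjesOn (u : ℝ → ℝ) (S : Set ℝ) : Prop :=
  ∀ sf : StieltjesFunction ℝ, (∀ t : ℝ, sf t = u (max t 0)) → sf.measure S = 0

/-- `u₁, u₂` is a valid pair of regulator processes for `x₁` (barrier `0` from above)
and `x₂` (upper barrier `B ∈ [0,∞]`): nondecreasing nonnegative elements of `D` with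
`∫₀^∞ 𝟙{x₁(t) < 0} du₁(t) = 0` and `∫₀^∞ 𝟙{x₂(t) < B} du₂(t) = 0`. -/
def IsRegulator (B : ℝ≥0∞) (x₁ x₂ u₁ u₂ : ℝ → ℝ) : Prop :=
  Cadlag u₁ ∧ Cadlag u₂ ∧ MonotoneOn u₁ (Set.Ici 0) ∧ MonotoneOn u₂ (Set.Ici 0) ∧
    (∀ t ≥ (0:ℝ), 0 ≤ u₁ t) ∧ (∀ t ≥ (0:ℝ), 0 ≤ u₂ t) ∧
    ZeroStieltjesOn u₁ {t | 0 ≤ t ∧ x₁ t < 0} ∧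
    ZeroStieltjesOn u₂ {t | 0 ≤ t ∧ ENNReal.ofReal (x₂ t) < B}

/-!
For finite barriers the regulator is jointly Lipschitz,
`|ψ_κ(x)(t) - ψ_κ'(x')(t)| ≤ ‖x - x'‖_t + |κ - κ'|`, because `(·)⁺` and suprema are
1-Lipschitz. Near `κ = ∞` the regulator eventually vanishes on `[0,t]`: a càdlàg `x` is bounded
there, so once `κₙ` exceeds that bound plus `‖xₙ - x‖_t` the path `xₙ` never reaches the barrier.
Since `φ = x - ψ`, the reflection map inherits both estimates.
-/

open Bornology Topology

lemma Cadlag.sub {f g : ℝ → ℝ} (hf : Cadlag f) (hg : Cadlag g) :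
    Cadlag (fun s => f s - g s) := by
  refine ⟨fun t ht => (hf.1 t ht).sub (hg.1 t ht), fun t ht => ?_⟩
  obtain ⟨L, hL⟩ := hf.2 t ht
  obtain ⟨M, hM⟩ := hg.2 t ht
  exact ⟨L - M, hL.sub hM⟩

/-- The one-sided limits bound `f` near each point; compactness does the rest. -/
lemma Cadlag.isBounded_image {f : ℝ → ℝ} (hf : Cadlag f) {K : Set ℝ} (hK : IsCompact K)
    (hK0 : K ⊆ Ici 0) : IsBounded (f '' K) := by
  refine hK.induction_on (p := fun u => IsBounded (f '' u)) (by simp)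
    (fun u v huv hv => hv.subset (image_mono huv))
    (fun u v hu hv => by simpa only [image_union] using hu.union hv) fun s hs => ?_
  obtain ⟨u, hu, hfu⟩ := Metric.exists_isBounded_image_of_tendsto (hf.1 s (hK0 hs))
  rcases (mem_Ici.1 (hK0 hs)).eq_or_lt with rfl | hpos
  · exact ⟨u, nhdsWithin_mono _ hK0 hu, hfu⟩
  · obtain ⟨L, hL⟩ := hf.2 s hpos
    obtain ⟨v, hv, hfv⟩ := Metric.exists_isBounded_image_of_tendsto hL
    refine ⟨v ∪ u, mem_nhdsWithin_of_mem_nhds ?_, by simpa only [image_union] using hfv.union hfu⟩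
    rw [← nhdsLT_sup_nhdsGE]
    exact union_mem_sup hv hu

lemma Cadlag.isBounded_image_Icc {f : ℝ → ℝ} (hf : Cadlag f) (t : ℝ) :
    IsBounded (f '' Icc 0 t) :=
  hf.isBounded_image isCompact_Icc fun _ hs => hs.1

lemma unif_nonneg (f : ℝ → ℝ) (t : ℝ) : 0 ≤ unif f t :=
  Real.iSup_nonneg fun _ => abs_nonneg _

lemma unif_le {f : ℝ → ℝ} {t c : ℝ} (ht : 0 ≤ t) (h : ∀ s ∈ Icc 0 t, |f s| ≤ c) :
    unif f t ≤ c :=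
  have : Nonempty (Icc (0:ℝ) t) := ⟨⟨0, le_rfl, ht⟩⟩
  ciSup_le fun s => h s.1 s.2

lemma abs_le_unif {f : ℝ → ℝ} {t s : ℝ} (hf : IsBounded (f '' Icc 0 t)) (hs : s ∈ Icc 0 t) :
    |f s| ≤ unif f t := by
  obtain ⟨C, hC⟩ := hf.exists_norm_le
  exact le_ciSup ⟨C, forall_mem_range.2 fun u => hC _ (mem_image_of_mem f u.2)⟩
    (⟨s, hs⟩ : Icc (0:ℝ) t)

lemma Cadlag.abs_sub_le_unif {f g : ℝ → ℝ} (hf : Cadlag f) (hg : Cadlag g) {t s : ℝ}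
    (hs : s ∈ Icc 0 t) : |f s - g s| ≤ unif (fun u => f u - g u) t :=
  abs_le_unif ((hf.sub hg).isBounded_image_Icc t) hs

lemma tendsto_unif_of_abs_le {ι : Type*} {l : Filter ι} {f : ι → ℝ → ℝ} {g : ι → ℝ} {t : ℝ}
    (ht : 0 ≤ t) (hg : Tendsto g l (𝓝 0)) (hfg : ∀ᶠ n in l, ∀ s ∈ Icc 0 t, |f n s| ≤ g n) :
    Tendsto (fun n => unif (f n) t) l (𝓝 0) :=
  squeeze_zero' (Eventually.of_forall fun _ => unif_nonneg _ _)
    (hfg.mono fun _ h => unif_le ht h) hg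

lemma psiR_nonneg (κ : ℝ) (x : ℝ → ℝ) (t : ℝ) : 0 ≤ psiR κ x t :=
  Real.iSup_nonneg fun _ => le_max_right _ _

lemma le_psiR {κ t s : ℝ} {x : ℝ → ℝ} (hx : BddAbove (x '' Icc 0 t)) (hs : s ∈ Icc 0 t) :
    max (x s - κ) 0 ≤ psiR κ x t := by
  obtain ⟨M, hM⟩ := hx
  refine le_ciSup (f := fun u : Icc (0:ℝ) t => max (x u - κ) 0)
    ⟨max (M - κ) 0, forall_mem_range.2 fun u => ?_⟩ ⟨s, hs⟩
  exact max_le_max (sub_le_sub_right (hM (mem_image_of_mem x u.2)) κ) le_rfl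

lemma psiR_le_psiR_add {κ₁ κ₂ c t : ℝ} {x₁ x₂ : ℝ → ℝ} (hx₂ : BddAbove (x₂ '' Icc 0 t))
    (hc : 0 ≤ c) (h : ∀ s ∈ Icc 0 t, x₁ s - κ₁ ≤ x₂ s - κ₂ + c) :
    psiR κ₁ x₁ t ≤ psiR κ₂ x₂ t + c := by
  have hψ₂ := psiR_nonneg κ₂ x₂ t
  refine Real.iSup_le (fun s => max_le ?_ (by linarith)) (by linarith)
  have := (le_max_left _ _).trans (le_psiR (κ := κ₂) hx₂ s.2)
  linarith [h s.1 s.2]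

lemma abs_psiR_sub_psiR_le {κ₁ κ₂ a t : ℝ} {x₁ x₂ : ℝ → ℝ} (hx₁ : BddAbove (x₁ '' Icc 0 t))
    (hx₂ : BddAbove (x₂ '' Icc 0 t)) (ha : 0 ≤ a) (h : ∀ s ∈ Icc 0 t, |x₁ s - x₂ s| ≤ a) :
    |psiR κ₁ x₁ t - psiR κ₂ x₂ t| ≤ a + |κ₁ - κ₂| := by
  have hc : 0 ≤ a + |κ₁ - κ₂| := by positivity
  have hκ := abs_le.1 (le_refl |κ₁ - κ₂|)
  rw [abs_sub_le_iff, sub_le_iff_le_add', sub_le_iff_le_add']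
  constructor
  · exact psiR_le_psiR_add hx₂ hc fun s hs => by linarith [abs_le.1 (h s hs)]
  · exact psiR_le_psiR_add hx₁ hc fun s hs => by linarith [abs_le.1 (h s hs)]

lemma phiE_apply (κ : ℝ≥0∞) (x : ℝ → ℝ) (t : ℝ) : phiE κ x t = x t - psiE κ x t := by
  by_cases hκ : κ = ⊤ <;> simp [phiE, psiE, phiR, hκ]

lemma psiE_eq_zero {κ : ℝ≥0∞} {x : ℝ → ℝ} {t : ℝ} (h : ∀ s ∈ Icc 0 t, ENNReal.ofReal (x s) ≤ κ) :
    psiE κ x t = 0 := by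
  by_cases hκ : κ = ⊤
  · simp [psiE, hκ]
  simp only [psiE, if_neg hκ]
  refine le_antisymm (Real.iSup_le (fun s => max_le ?_ le_rfl) le_rfl) (psiR_nonneg _ _ _)
  exact sub_nonpos.2 ((ENNReal.ofReal_le_iff_le_toReal hκ).1 (h s.1 s.2))

lemma abs_psiE_sub_psiE_le {κ₁ κ₂ : ℝ≥0∞} (hκ₁ : κ₁ ≠ ⊤) (hκ₂ : κ₂ ≠ ⊤) {x₁ x₂ : ℝ → ℝ}
    (hx₁ : Cadlag x₁) (hx₂ : Cadlag x₂) {t s : ℝ} (hs : s ∈ Icc 0 t) :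
    |psiE κ₁ x₁ s - psiE κ₂ x₂ s| ≤ unif (fun u => x₁ u - x₂ u) t + |κ₁.toReal - κ₂.toReal| := by
  simp only [psiE, if_neg hκ₁, if_neg hκ₂]
  exact abs_psiR_sub_psiR_le (hx₁.isBounded_image_Icc s).bddAbove
    (hx₂.isBounded_image_Icc s).bddAbove (unif_nonneg _ _)
    fun u hu => hx₁.abs_sub_le_unif hx₂ (Icc_subset_Icc_right hs.2 hu)

section Convergence

variable {ι : Type*} {l : Filter ι} {κs : ι → ℝ≥0∞} {xs : ι → ℝ → ℝ} {x : ℝ → ℝ} {t : ℝ}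

lemma eventually_psiE_eq_zero_of_tendsto_top (hxs : ∀ n, Cadlag (xs n)) (hx : Cadlag x)
    (hκ : Tendsto κs l (𝓝 ⊤))
    (hxconv : Tendsto (fun n => unif (fun s => xs n s - x s) t) l (𝓝 0)) :
    ∀ᶠ n in l, ∀ s ∈ Icc 0 t, psiE (κs n) (xs n) s = 0 := by
  obtain ⟨M, hM⟩ := (hx.isBounded_image_Icc t).bddAbove
  filter_upwards [hκ (Ioi_mem_nhds (ENNReal.ofReal_lt_top (r := M + 1))),
    hxconv.eventually_lt_const one_pos] with n hκn hdn s hs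
  refine psiE_eq_zero fun u hu => le_trans (ENNReal.ofReal_le_ofReal ?_) hκn.le
  have hu' : u ∈ Icc 0 t := Icc_subset_Icc_right hs.2 hu
  linarith [(abs_le.1 ((hxs n).abs_sub_le_unif hx hu')).2, hM (mem_image_of_mem x hu')]

lemma exists_tendsto_abs_psiE_sub_le (hxs : ∀ n, Cadlag (xs n)) (hx : Cadlag x) {κ : ℝ≥0∞}
    (hκ : Tendsto κs l (𝓝 κ))
    (hxconv : Tendsto (fun n => unif (fun s => xs n s - x s) t) l (𝓝 0)) :
    ∃ g : ι → ℝ, Tendsto g l (𝓝 0) ∧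
      ∀ᶠ n in l, ∀ s ∈ Icc 0 t, |psiE (κs n) (xs n) s - psiE κ x s| ≤ g n := by
  by_cases hκtop : κ = ⊤
  · subst hκtop
    refine ⟨0, tendsto_const_nhds, ?_⟩
    filter_upwards [eventually_psiE_eq_zero_of_tendsto_top hxs hx hκ hxconv] with n hn s hs
    simpa [psiE] using hn s hs
  · refine ⟨fun n => unif (fun s => xs n s - x s) t + |(κs n).toReal - κ.toReal|, ?_, ?_⟩
    · simpa using hxconv.add (((ENNReal.tendsto_toReal hκtop).comp hκ).sub_const κ.toReal).abs
    · filter_upwards [hκ.eventually_ne hκtop] with n hn s hs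
      exact abs_psiE_sub_psiE_le hn hκtop (hxs n) hx hs

end Convergence

/-- **Continuity of the one-sided reflection map `(φ,ψ) : [0,∞] × D → D²`**
(with the order topology on `[0,∞]` and the topology of uniform convergence on
bounded intervals on `D`): if `κₙ → κ` in `[0,∞]` and `xₙ → x` in `D`, then
`φ_{κₙ}(xₙ) → φ_κ(x)` and `ψ_{κₙ}(xₙ) → ψ_κ(x)` in `D`. -/
theorem reflection_map_continuous
    (κs : ℕ → ℝ≥0∞) (κ : ℝ≥0∞) (xs : ℕ → ℝ → ℝ) (x : ℝ → ℝ)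
    (hxs : ∀ n, Cadlag (xs n)) (hx : Cadlag x)
    (hκ : Tendsto κs atTop (nhds κ))
    (hxconv : ∀ t ≥ (0:ℝ),
      Tendsto (fun n => unif (fun s => xs n s - x s) t) atTop (nhds 0)) :
    (∀ t ≥ (0:ℝ),
      Tendsto (fun n => unif (fun s => phiE (κs n) (xs n) s - phiE κ x s) t)
        atTop (nhds 0)) ∧
    (∀ t ≥ (0:ℝ),
      Tendsto (fun n => unif (fun s => psiE (κs n) (xs n) s - psiE κ x s) t)
        atTop (nhds 0)) := by
  refine ⟨fun t ht => ?_, fun t ht => ?_⟩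
  · obtain ⟨g, hg, hψ⟩ := exists_tendsto_abs_psiE_sub_le hxs hx hκ (hxconv t ht)
    refine tendsto_unif_of_abs_le ht (by simpa using (hxconv t ht).add hg) ?_
    filter_upwards [hψ] with n hn s hs
    rw [phiE_apply, phiE_apply, sub_sub_sub_comm]
    exact (abs_sub _ _).trans (add_le_add ((hxs n).abs_sub_le_unif hx hs) (hn s hs))
  · obtain ⟨g, hg, hψ⟩ := exists_tendsto_abs_psiE_sub_le hxs hx hκ (hxconv t ht)
    exact tendsto_unif_of_abs_le ht hg hψ
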